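/- If f : X_• → Y_• is a levelwise injective map of simplicial abelian groups and the associated augmented complexes (rows) 0 → F(Y_p) → F(X_{0,p}) → F(X_{1,p}) → ⋯ are exact for every p, then the induced map of total complexes is injective on cohomology: any class in the total complex of Y whose pullback is a total coboundary is itself a total coboundary. -/
import Mathlib


section

variable {K : ℕ → ℕ → ℕ → Type*} [∀ r p q, AddCommGroup (K r p q)]
variable {V : ℕ → ℕ → Type*} [∀ p q, AddCommGroup (V p q)]

/-- The `δ₁`-contribution `δ₁(c_{r−1,p,q})` to the total differential of the
triple complex. -/
def tot3A (δ₁ : ∀ r p q, K r p q →+ K (r + 1) p q) (c : ∀ r p q, K r p q) :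
    ∀ r p q, K r p q
  | 0, _, _ => 0
  | (r + 1), p, q => δ₁ r p q (c r p q)

/-- The `δ₂`-contribution `δ₂(c_{r,p−1,q})` to the total differential. -/
def tot3B (δ₂ : ∀ r p q, K r p q →+ K r (p + 1) q) (c : ∀ r p q, K r p q) :
    ∀ r p q, K r p q
  | _, 0, _ => 0
  | r, (p + 1), q => δ₂ r p q (c r p q)

/-- The `d`-contribution `d(c_{r,p,q−1})` to the total differential. -/
def tot3C (d : ∀ r p q, K r p q →+ K r p (q + 1)) (c : ∀ r p q, K r p q) :
    ∀ r p q, K r p q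
  | _, _, 0 => 0
  | r, p, (q + 1) => d r p q (c r p q)

/-- The total differential `D = δ₁ + (−1)^r δ₂ + (−1)^{r+p} d` of a first-octant
triple complex. -/
def totD3 (δ₁ : ∀ r p q, K r p q →+ K (r + 1) p q)
    (δ₂ : ∀ r p q, K r p q →+ K r (p + 1) q)
    (d : ∀ r p q, K r p q →+ K r p (q + 1))
    (c : ∀ r p q, K r p q) (r p q : ℕ) : K r p q :=
  tot3A δ₁ c r p q + ((-1 : ℤ) ^ r) • tot3B δ₂ c r p q
    + ((-1 : ℤ) ^ (r + p)) • tot3C d c r p q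

/-- The horizontal (`δ₂`-direction) contribution to the total differential of the
augmentation double complex `V^{p,q}`. -/
def tot2A (δ₂V : ∀ p q, V p q →+ V (p + 1) q) (ω : ∀ p q, V p q) :
    ∀ p q, V p q
  | 0, _ => 0
  | (p + 1), q => δ₂V p q (ω p q)

/-- The vertical (`d`-direction) contribution to the total differential of the
augmentation double complex. -/
def tot2B (dV : ∀ p q, V p q →+ V p (q + 1)) (ω : ∀ p q, V p q) :
    ∀ p q, V p q
  | _, 0 => 0
  | p, (q + 1) => dV p q (ω p q)

/-- The total differential `D̃ = δ₂ + (−1)^p d` of the augmentation double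
complex. -/
def totD2 (δ₂V : ∀ p q, V p q →+ V (p + 1) q)
    (dV : ∀ p q, V p q →+ V p (q + 1))
    (ω : ∀ p q, V p q) (p q : ℕ) : V p q :=
  tot2A δ₂V ω p q + ((-1 : ℤ) ^ p) • tot2B dV ω p q

/-- The extension of the augmentation `f* : V^{p,q} → K^{0,p,q}` to an embedding of
total complexes, placing `f*(ω)` in the `r = 0` layer. -/
def augEmb (f : ∀ p q, V p q →+ K 0 p q) (ω : ∀ p q, V p q) :
    ∀ r p q, K r p q
  | 0, p, q => f p q (ω p q)
  | (_ + 1), _, _ => 0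

end

section helpers

variable {K : ℕ → ℕ → ℕ → Type*} [∀ r p q, AddCommGroup (K r p q)]
variable {V : ℕ → ℕ → Type*} [∀ p q, AddCommGroup (V p q)]
variable (δ₁ : ∀ r p q, K r p q →+ K (r + 1) p q)
    (δ₂ : ∀ r p q, K r p q →+ K r (p + 1) q)
    (d : ∀ r p q, K r p q →+ K r p (q + 1))

lemma tot3A_sub (a b : ∀ r p q, K r p q) (r p q : ℕ) :
    tot3A δ₁ (fun r p q => a r p q - b r p q) r p q
      = tot3A δ₁ a r p q - tot3A δ₁ b r p q := by
  cases r <;> simp [tot3A]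

lemma tot3B_sub (a b : ∀ r p q, K r p q) (r p q : ℕ) :
    tot3B δ₂ (fun r p q => a r p q - b r p q) r p q
      = tot3B δ₂ a r p q - tot3B δ₂ b r p q := by
  cases p <;> simp [tot3B]

lemma tot3C_sub (a b : ∀ r p q, K r p q) (r p q : ℕ) :
    tot3C d (fun r p q => a r p q - b r p q) r p q
      = tot3C d a r p q - tot3C d b r p q := by
  cases q <;> simp [tot3C]

lemma totD3_sub (a b : ∀ r p q, K r p q) (r p q : ℕ) :
    totD3 δ₁ δ₂ d (fun r p q => a r p q - b r p q) r p q
      = totD3 δ₁ δ₂ d a r p q - totD3 δ₁ δ₂ d b r p q := by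
  simp only [totD3, tot3A_sub, tot3B_sub, tot3C_sub, smul_sub]
  abel

set_option maxHeartbeats 1000000 in
lemma totD3_totD3
    (hδ₁ : ∀ r p q (x : K r p q), δ₁ (r + 1) p q (δ₁ r p q x) = 0)
    (hδ₂ : ∀ r p q (x : K r p q), δ₂ r (p + 1) q (δ₂ r p q x) = 0)
    (hd : ∀ r p q (x : K r p q), d r p (q + 1) (d r p q x) = 0)
    (hc12 : ∀ r p q (x : K r p q), δ₁ r (p + 1) q (δ₂ r p q x) = δ₂ (r + 1) p q (δ₁ r p q x))
    (hc1d : ∀ r p q (x : K r p q), δ₁ r p (q + 1) (d r p q x) = d (r + 1) p q (δ₁ r p q x))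
    (hc2d : ∀ r p q (x : K r p q), δ₂ r p (q + 1) (d r p q x) = d r (p + 1) q (δ₂ r p q x))
    (c : ∀ r p q, K r p q) (r p q : ℕ) :
    totD3 δ₁ δ₂ d (totD3 δ₁ δ₂ d c) r p q = 0 := by
  rcases r with _|_|r <;> rcases p with _|_|p <;> rcases q with _|_|q <;>
    simp only [totD3, tot3A, tot3B, tot3C, map_add, map_zsmul, map_zero,
      smul_zero, add_zero, zero_add, hδ₁, hδ₂, hd, hc12, hc1d, hc2d,
      smul_smul, pow_succ, pow_zero, smul_add] <;>
    module

lemma descend (f : ∀ p q, V p q →+ K 0 p q)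
    (hδ₁ : ∀ r p q (x : K r p q), δ₁ (r + 1) p q (δ₁ r p q x) = 0)
    (hδ₂ : ∀ r p q (x : K r p q), δ₂ r (p + 1) q (δ₂ r p q x) = 0)
    (hd : ∀ r p q (x : K r p q), d r p (q + 1) (d r p q x) = 0)
    (hc12 : ∀ r p q (x : K r p q), δ₁ r (p + 1) q (δ₂ r p q x) = δ₂ (r + 1) p q (δ₁ r p q x))
    (hc1d : ∀ r p q (x : K r p q), δ₁ r p (q + 1) (d r p q x) = d (r + 1) p q (δ₁ r p q x))
    (hc2d : ∀ r p q (x : K r p q), δ₂ r p (q + 1) (d r p q x) = d r (p + 1) q (δ₂ r p q x))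
    (hexact : ∀ r p q (x : K (r + 1) p q), δ₁ (r + 1) p q x = 0 →
      ∃ y : K r p q, δ₁ r p q y = x) :
    ∀ (R n : ℕ) (ω : ∀ p q, V p q) (φ : ∀ r p q, K r p q),
      (∀ r p q, r + p + q + 1 ≠ n → φ r p q = 0) →
      (∀ r p q, R < r → φ r p q = 0) →
      (∀ r p q, augEmb f ω r p q = totD3 δ₁ δ₂ d φ r p q) →
      ∃ φ₀ : ∀ r p q, K r p q,
        (∀ r p q, r + p + q + 1 ≠ n → φ₀ r p q = 0) ∧
        (∀ r p q, 0 < r → φ₀ r p q = 0) ∧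
        (∀ r p q, augEmb f ω r p q = totD3 δ₁ δ₂ d φ₀ r p q) := by
  intro R
  induction R with
  | zero => exact fun n ω φ h1 h2 h3 => ⟨φ, h1, h2, h3⟩
  | succ R ih =>
    intro n ω φ hsupp hbound heq
    -- the top layer is δ₁-closed
    have δtop : ∀ p q, δ₁ (R + 1) p q (φ (R + 1) p q) = 0 := by
      intro p q
      have h := heq (R + 2) p q
      have hB : tot3B δ₂ φ (R + 2) p q = 0 := by
        cases p with
        | zero => rfl
        | succ p => show δ₂ _ _ _ (φ (R + 2) p q) = 0
                    rw [hbound _ _ _ (by omega), map_zero]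
      have hC : tot3C d φ (R + 2) p q = 0 := by
        cases q with
        | zero => rfl
        | succ q => show d _ _ _ (φ (R + 2) p q) = 0
                    rw [hbound _ _ _ (by omega), map_zero]
      have hE : augEmb f ω (R + 2) p q = 0 := rfl
      rw [hE, totD3, hB, hC, smul_zero, smul_zero, add_zero, add_zero] at h
      exact h.symm
    -- choose a δ₁-preimage of the top layer, supported in the right degrees
    obtain ⟨y, hy, hysupp⟩ :
        ∃ y : ∀ p q, K R p q,
          (∀ p q, δ₁ R p q (y p q) = φ (R + 1) p q) ∧
          (∀ p q, R + p + q + 2 ≠ n → y p q = 0) := by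
      choose g hg using fun p q => hexact R p q (φ (R + 1) p q) (δtop p q)
      refine ⟨fun p q => if h : R + p + q + 2 = n then g p q else 0, ?_, ?_⟩
      · intro p q
        beta_reduce
        by_cases h : R + p + q + 2 = n
        · rw [dif_pos h]; exact hg p q
        · rw [dif_neg h, map_zero, hsupp (R + 1) p q (by omega)]
      · intro p q h; beta_reduce; exact dif_neg h
    -- embed y as a layer-R cochain ψ
    obtain ⟨ψ, hψR, hψne⟩ :
        ∃ ψ : ∀ r p q, K r p q,
          (∀ p q, ψ R p q = y p q) ∧ (∀ r p q, R ≠ r → ψ r p q = 0) :=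
      ⟨fun r p q => if h : R = r then h ▸ y p q else 0,
        fun p q => dif_pos rfl, fun r p q h => dif_neg h⟩
    have hA0 : ∀ r p q, r ≠ R + 1 → tot3A δ₁ ψ r p q = 0 := by
      intro r p q h
      cases r with
      | zero => rfl
      | succ r => show δ₁ _ _ _ (ψ r p q) = 0
                  rw [hψne r p q (by omega), map_zero]
    have hA1 : ∀ p q, tot3A δ₁ ψ (R + 1) p q = δ₁ R p q (y p q) := by
      intro p q; show δ₁ _ _ _ (ψ R p q) = _; rw [hψR]
    have hB0 : ∀ r p q, r ≠ R → tot3B δ₂ ψ r p q = 0 := by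
      intro r p q h
      cases p with
      | zero => rfl
      | succ p => show δ₂ _ _ _ (ψ r p q) = 0
                  rw [hψne r p q (by omega), map_zero]
    have hB1 : ∀ p q, tot3B δ₂ ψ R (p + 1) q = δ₂ R p q (y p q) := by
      intro p q; show δ₂ _ _ _ (ψ R p q) = _; rw [hψR]
    have hC0 : ∀ r p q, r ≠ R → tot3C d ψ r p q = 0 := by
      intro r p q h
      cases q with
      | zero => rfl
      | succ q => show d _ _ _ (ψ r p q) = 0
                  rw [hψne r p q (by omega), map_zero]
    have hC1 : ∀ p q, tot3C d ψ R p (q + 1) = d R p q (y p q) := by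
      intro p q; show d _ _ _ (ψ R p q) = _; rw [hψR]
    -- apply the induction hypothesis to φ - Dψ
    apply ih n ω (fun r p q => φ r p q - totD3 δ₁ δ₂ d ψ r p q)
    · -- degree support
      intro r p q h
      have hφ0 := hsupp r p q h
      have hA : tot3A δ₁ ψ r p q = 0 := by
        by_cases hr : r = R + 1
        · subst hr; rw [hA1, hysupp p q (by omega), map_zero]
        · exact hA0 r p q hr
      have hB : tot3B δ₂ ψ r p q = 0 := by
        by_cases hr : r = R
        · subst hr
          cases p with
          | zero => rfl
          | succ p => rw [hB1, hysupp p q (by omega), map_zero]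
        · exact hB0 r p q (by omega)
      have hC : tot3C d ψ r p q = 0 := by
        by_cases hr : r = R
        · subst hr
          cases q with
          | zero => rfl
          | succ q => rw [hC1, hysupp p q (by omega), map_zero]
        · exact hC0 r p q (by omega)
      simp [totD3, hφ0, hA, hB, hC]
    · -- vanishing above layer R
      intro r p q hr
      by_cases h1 : r = R + 1
      · subst h1
        rw [totD3, hA1, hB0 _ _ _ (by omega), hC0 _ _ _ (by omega),
          smul_zero, smul_zero, add_zero, add_zero, hy, sub_self]
      · rw [totD3, hA0 _ _ _ h1, hB0 _ _ _ (by omega), hC0 _ _ _ (by omega),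
          smul_zero, smul_zero, add_zero, add_zero,
          hbound r p q (by omega), sub_zero]
    · -- same total differential
      intro r p q
      rw [totD3_sub, totD3_totD3 δ₁ δ₂ d hδ₁ hδ₂ hd hc12 hc1d hc2d,
        sub_zero]
      exact heq r p q

end helpers

/-- in the augmented triple complex setting (injections
`f* : V^{p,q} → K^{0,p,q}` commuting with `δ₂` and `d`, with exact augmented rows
in the `δ₁`-direction), the induced map of total complexes is injective on
cohomology: any degree-`n` element of the total complex of `V` whose image is a
total coboundary is itself a total coboundary. -/
theorem augmentation_injective_on_cohomology
    {K : ℕ → ℕ → ℕ → Type*} [∀ r p q, AddCommGroup (K r p q)]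
    {V : ℕ → ℕ → Type*} [∀ p q, AddCommGroup (V p q)]
    (δ₁ : ∀ r p q, K r p q →+ K (r + 1) p q)
    (δ₂ : ∀ r p q, K r p q →+ K r (p + 1) q)
    (d : ∀ r p q, K r p q →+ K r p (q + 1))
    (δ₂V : ∀ p q, V p q →+ V (p + 1) q)
    (dV : ∀ p q, V p q →+ V p (q + 1))
    (f : ∀ p q, V p q →+ K 0 p q)
    (hδ₁ : ∀ r p q (x : K r p q), δ₁ (r + 1) p q (δ₁ r p q x) = 0)
    (hδ₂ : ∀ r p q (x : K r p q), δ₂ r (p + 1) q (δ₂ r p q x) = 0)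
    (hd : ∀ r p q (x : K r p q), d r p (q + 1) (d r p q x) = 0)
    (hc12 : ∀ r p q (x : K r p q), δ₁ r (p + 1) q (δ₂ r p q x) = δ₂ (r + 1) p q (δ₁ r p q x))
    (hc1d : ∀ r p q (x : K r p q), δ₁ r p (q + 1) (d r p q x) = d (r + 1) p q (δ₁ r p q x))
    (hc2d : ∀ r p q (x : K r p q), δ₂ r p (q + 1) (d r p q x) = d r (p + 1) q (δ₂ r p q x))
    (hδ₂V : ∀ p q (v : V p q), δ₂V (p + 1) q (δ₂V p q v) = 0)
    (hdV : ∀ p q (v : V p q), dV p (q + 1) (dV p q v) = 0)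
    (hcV : ∀ p q (v : V p q), δ₂V p (q + 1) (dV p q v) = dV (p + 1) q (δ₂V p q v))
    (hf_inj : ∀ p q, Function.Injective (f p q))
    (hf2 : ∀ p q (v : V p q), f (p + 1) q (δ₂V p q v) = δ₂ 0 p q (f p q v))
    (hfd : ∀ p q (v : V p q), f p (q + 1) (dV p q v) = d 0 p q (f p q v))
    (hexact0 : ∀ p q (x : K 0 p q), δ₁ 0 p q x = 0 → ∃ v : V p q, f p q v = x)
    (hexact : ∀ r p q (x : K (r + 1) p q), δ₁ (r + 1) p q x = 0 →
      ∃ y : K r p q, δ₁ r p q y = x) :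
    ∀ (n : ℕ) (ω : ∀ p q, V p q),
      (∀ p q, p + q ≠ n → ω p q = 0) →
      (∃ φ : ∀ r p q, K r p q,
        (∀ r p q, r + p + q + 1 ≠ n → φ r p q = 0) ∧
        (∀ r p q, augEmb f ω r p q = totD3 δ₁ δ₂ d φ r p q)) →
      ∃ ω' : ∀ p q, V p q,
        (∀ p q, p + q + 1 ≠ n → ω' p q = 0) ∧
        (∀ p q, ω p q = totD2 δ₂V dV ω' p q) := by
  intro n ω hωsupp ⟨φ, hφsupp, hφeq⟩
  obtain ⟨φ₀, h1, h2, h3⟩ :=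
    descend δ₁ δ₂ d f hδ₁ hδ₂ hd hc12 hc1d hc2d hexact n n ω φ hφsupp
      (fun r p q hr => hφsupp r p q (by omega)) hφeq
  have hδ0 : ∀ p q, δ₁ 0 p q (φ₀ 0 p q) = 0 := by
    intro p q
    have h := h3 1 p q
    have hB : tot3B δ₂ φ₀ 1 p q = 0 := by
      cases p with
      | zero => rfl
      | succ p => show δ₂ _ _ _ (φ₀ 1 p q) = 0
                  rw [h2 1 p q (by omega), map_zero]
    have hC : tot3C d φ₀ 1 p q = 0 := by
      cases q with
      | zero => rfl
      | succ q => show d _ _ _ (φ₀ 1 p q) = 0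
                  rw [h2 1 p q (by omega), map_zero]
    have hE : augEmb f ω 1 p q = 0 := rfl
    rw [hE, totD3, hB, hC, smul_zero, smul_zero, add_zero, add_zero] at h
    exact h.symm
  choose ω' hω' using fun p q => hexact0 p q (φ₀ 0 p q) (hδ0 p q)
  refine ⟨ω', ?_, ?_⟩
  · intro p q h
    apply hf_inj p q
    rw [hω', map_zero, h1 0 p q (by omega)]
  · intro p q
    apply hf_inj p q
    have e1 : f p q (tot2A δ₂V ω' p q) = tot3B δ₂ φ₀ 0 p q := by
      cases p with
      | zero => simp [tot2A, tot3B]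
      | succ p => show f _ _ (δ₂V p q (ω' p q)) = δ₂ 0 p q (φ₀ 0 p q)
                  rw [hf2, hω']
    have e2 : f p q (tot2B dV ω' p q) = tot3C d φ₀ 0 p q := by
      cases q with
      | zero => simp [tot2B, tot3C]
      | succ q => show f _ _ (dV p q (ω' p q)) = d 0 p q (φ₀ 0 p q)
                  rw [hfd, hω']
    rw [totD2, map_add, map_zsmul, e1, e2]
    have h := h3 0 p q
    have hE : augEmb f ω 0 p q = f p q (ω p q) := rfl
    have hA : tot3A δ₁ φ₀ 0 p q = 0 := rfl
    rw [hE, totD3, hA, zero_add, pow_zero, one_smul, Nat.zero_add] at h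
    exact h
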